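/- arXiv:1902.04467 — 2 statements merged into one kernel-verified Lean document; each statement's English description precedes it below -/
import Mathlib

section
/- There exist a finite-rank operator K₁ on ℓ²(ℕ, 1), mapping finitely supported functions to finitely supported functions, and a constant c ≥ 0, such that for every finitely supported f : ℕ → ℂ: Δ_ℕ(i A_ℕ f) − i A_ℕ(Δ_ℕ f) = (1/2)·Δ_ℕ((4 − Δ_ℕ) f) + K₁ f, and moreover |⟨A_ℕ f, Δ_ℕ f⟩ − ⟨Δ_ℕ f, A_ℕ f⟩| ≤ c·‖f‖², the inner product and norm being those of ℓ²(ℕ, 1). -/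
/-!
Both `Δ_ℕ` and `A_ℕ` are Jacobi matrices with real diagonal and conjugate off-diagonals,
hence symmetric on finitely supported functions, so that
`⟨A f, Δ f⟩ - ⟨Δ f, A f⟩ = ⟨f, (AΔ - ΔA) f⟩ = i ⟨f, [Δ, iA] f⟩`.
Expanding the three-term recurrences, `[Δ, iA]` is the band matrix `1 - (U² + U*²)/2`
away from the corner `{0, 1}²`; so is `½ Δ(4 - Δ)`, and the two differ by a rank-two corner
`K₁`. The quadratic form of a band matrix is bounded through `|f n| |f m| ≤ (|f n|² + |f m|²)/2`,
since the shifts `U^k`, `U*^k` do not increase the `ℓ²` norm.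
-/

noncomputable section

open Complex

/-- `(Δ_ℕ f)(n) = 2f(n) − f(n−1) − f(n+1)` for `n ≥ 1`, `(Δ_ℕ f)(0) = f(0) − f(1)`. -/
def deltaN (f : ℕ → ℂ) : ℕ → ℂ := fun n =>
  if n = 0 then f 0 - f 1 else 2 * f n - f (n - 1) - f (n + 1)

/-- `(A_ℕ f)(n) = (i/2)·((n − 1/2)·f(n−1) − (n + 1/2)·f(n+1))`, with `f(−1) = 0`. -/
def aN (f : ℕ → ℂ) : ℕ → ℂ := fun n =>
  (I / 2) * (((n : ℂ) - 1 / 2) * (if n = 0 then 0 else f (n - 1))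
    - ((n : ℂ) + 1 / 2) * f (n + 1))

/-- The inner product of `ℓ²(ℕ, 1)`: `⟨f,g⟩ = ∑ conj (f n) · g n`. -/
def ipN (f g : ℕ → ℂ) : ℂ := ∑' n : ℕ, (starRingEnd ℂ) (f n) * g n

open Function ComplexConjugate

section ShiftRight

variable {α : Type*}

def shiftRight [Zero α] (f : ℕ → α) : ℕ → α := fun n => if n = 0 then 0 else f (n - 1)

@[simp] lemma shiftRight_zero [Zero α] (f : ℕ → α) : shiftRight f 0 = 0 := rfl

@[simp] lemma shiftRight_succ [Zero α] (f : ℕ → α) (n : ℕ) : shiftRight f (n + 1) = f n := rfl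

lemma support_shiftRight_subset [Zero α] (f : ℕ → α) :
    support (shiftRight f) ⊆ Nat.succ '' support f := by
  rintro (_ | n) hn
  · simp at hn
  · exact ⟨n, hn, rfl⟩

lemma Function.HasFiniteSupport.shiftRight [Zero α] {f : ℕ → α} (hf : f.HasFiniteSupport) :
    (shiftRight f).HasFiniteSupport :=
  (hf.image _).subset (support_shiftRight_subset f)

lemma tsum_shiftRight [AddCommMonoid α] [TopologicalSpace α] (f : ℕ → α) :
    ∑' n, shiftRight f n = ∑' n, f n :=
  (Nat.succ_injective.tsum_eq fun _ hn => (support_shiftRight_subset f hn).imp fun _ h => h.2).symm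

lemma Summable.shiftRight [AddCommMonoid α] [TopologicalSpace α] {f : ℕ → α} (hf : Summable f) :
    Summable (shiftRight f) :=
  (Nat.succ_injective.summable_iff fun _ hn =>
    notMem_support.1 fun h => hn ((support_shiftRight_subset f h).imp fun _ h => h.2)).1 hf

end ShiftRight

lemma Function.HasFiniteSupport.comp_add_right {α : Type*} [Zero α] {f : ℕ → α}
    (hf : f.HasFiniteSupport) (k : ℕ) : (fun n => f (n + k)).HasFiniteSupport :=
  hf.comp_of_injective (add_left_injective k)

lemma Function.HasFiniteSupport.summable_conj_mul {f : ℕ → ℂ} (hf : f.HasFiniteSupport)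
    (g : ℕ → ℂ) : Summable fun n => conj (f n) * g n :=
  summable_of_hasFiniteSupport <| hf.subset fun n hn h0 => hn (by simp [h0])

lemma Function.HasFiniteSupport.summable_mul_left {g : ℕ → ℂ} (hg : g.HasFiniteSupport)
    (f : ℕ → ℂ) : Summable fun n => f n * g n :=
  summable_of_hasFiniteSupport <| hg.mul_right f

lemma tsum_norm_mul_le_of_norm_le_sum {β ι E : Type*} [SeminormedAddCommGroup E] (s : Finset ι)
    {w : ι → ℝ} (hw : ∀ i ∈ s, 0 ≤ w i) {f g : β → E} {h : ι → β → E}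
    (hf : Summable fun b => ‖f b‖ ^ 2) (hh : ∀ i ∈ s, Summable fun b => ‖h i b‖ ^ 2)
    (hhf : ∀ i ∈ s, ∑' b, ‖h i b‖ ^ 2 ≤ ∑' b, ‖f b‖ ^ 2)
    (hg : ∀ b, ‖g b‖ ≤ ∑ i ∈ s, w i * ‖h i b‖) :
    ∑' b, ‖f b‖ * ‖g b‖ ≤ (∑ i ∈ s, w i) * ∑' b, ‖f b‖ ^ 2 := by
  set F : ι → β → ℝ := fun i b => w i * ((‖f b‖ ^ 2 + ‖h i b‖ ^ 2) / 2)
  have hF : ∀ i ∈ s, Summable (F i) := fun i hi => ((hf.add (hh i hi)).div_const 2).mul_left _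
  have hle : ∀ b, ‖f b‖ * ‖g b‖ ≤ ∑ i ∈ s, F i b := fun b => calc
    ‖f b‖ * ‖g b‖ ≤ ‖f b‖ * ∑ i ∈ s, w i * ‖h i b‖ := by gcongr; exact hg b
    _ = ∑ i ∈ s, w i * (‖f b‖ * ‖h i b‖) := by
      rw [Finset.mul_sum]
      exact Finset.sum_congr rfl fun _ _ => by ring
    _ ≤ ∑ i ∈ s, F i b := Finset.sum_le_sum fun i hi =>
      mul_le_mul_of_nonneg_left (by nlinarith [sq_nonneg (‖f b‖ - ‖h i b‖)]) (hw i hi)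
  calc ∑' b, ‖f b‖ * ‖g b‖ ≤ ∑' b, ∑ i ∈ s, F i b :=
        (summable_sum hF).of_nonneg_of_le (fun b => by positivity) hle |>.tsum_le_tsum hle
          (summable_sum hF)
    _ = ∑ i ∈ s, w i * ((∑' b, ‖f b‖ ^ 2 + ∑' b, ‖h i b‖ ^ 2) / 2) := by
      rw [Summable.tsum_finsetSum hF]
      refine Finset.sum_congr rfl fun i hi => ?_
      rw [tsum_mul_left, tsum_div_const, hf.tsum_add (hh i hi)]
    _ ≤ ∑ i ∈ s, w i * ∑' b, ‖f b‖ ^ 2 := Finset.sum_le_sum fun i hi =>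
      mul_le_mul_of_nonneg_left (by linarith [hhf i hi]) (hw i hi)
    _ = (∑ i ∈ s, w i) * ∑' b, ‖f b‖ ^ 2 := (Finset.sum_mul ..).symm

section SquareSums

variable {E : Type*} [SeminormedAddCommGroup E]

lemma tsum_sq_norm_shiftRight (f : ℕ → E) :
    ∑' n, ‖shiftRight f n‖ ^ 2 = ∑' n, ‖f n‖ ^ 2 := by
  have : (fun n => ‖shiftRight f n‖ ^ 2) = shiftRight fun n => ‖f n‖ ^ 2 := by
    ext (_ | n) <;> simp
  rw [this, tsum_shiftRight]

lemma tsum_sq_norm_comp_add_le {f : ℕ → E} (hf : Summable fun n => ‖f n‖ ^ 2) (k : ℕ) :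
    ∑' n, ‖f (n + k)‖ ^ 2 ≤ ∑' n, ‖f n‖ ^ 2 := by
  rw [← hf.sum_add_tsum_nat_add k]
  exact le_add_of_nonneg_left (Finset.sum_nonneg fun _ _ => by positivity)

lemma Function.HasFiniteSupport.summable_sq_norm {f : ℕ → E} (hf : f.HasFiniteSupport) :
    Summable fun n => ‖f n‖ ^ 2 :=
  summable_of_hasFiniteSupport <| hf.fun_comp (g := fun x => ‖x‖ ^ 2) (by simp)

end SquareSums

def jacobi (a b f : ℕ → ℂ) : ℕ → ℂ := fun n =>
  a n * f n + b n * f (n + 1) + shiftRight (fun m => conj (b m) * f m) n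

lemma deltaN_eq_jacobi : deltaN = jacobi (fun n => if n = 0 then 1 else 2) (fun _ => -1) := by
  ext f (_ | n) <;> simp [deltaN, jacobi] <;> ring

lemma aN_eq_jacobi : aN = jacobi 0 (fun n => -(I / 2) * (n + 1 / 2)) := by
  ext f (_ | n) <;> simp [aN, jacobi, map_ofNat] <;> ring

lemma Function.HasFiniteSupport.jacobi (a b : ℕ → ℂ) {f : ℕ → ℂ} (hf : f.HasFiniteSupport) :
    (jacobi a b f).HasFiniteSupport :=
  ((hf.mul_right a).add ((hf.comp_add_right 1).mul_right b)).add
    (hf.mul_right fun m => conj (b m)).shiftRight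

lemma ipN_jacobi {a : ℕ → ℂ} (b : ℕ → ℂ) (ha : ∀ n, conj (a n) = a n) {f h : ℕ → ℂ}
    (hf : f.HasFiniteSupport) (hh : h.HasFiniteSupport) :
    ipN (jacobi a b f) h = ipN f (jacobi a b h) := by
  set P : ℕ → ℂ := fun n => conj (f n) * (a n * h n)
  set Q : ℕ → ℂ := fun n => conj (f n) * (b n * h (n + 1))
  set R : ℕ → ℂ := fun n => conj (f (n + 1)) * (conj (b n) * h n)
  have hP : Summable P := hf.summable_conj_mul _
  have hQ : Summable Q := hf.summable_conj_mul _
  have hR : Summable R :=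
    (hh.summable_mul_left fun n => conj (f (n + 1)) * conj (b n)).congr fun n => by ring
  have hL : ∀ n, conj (jacobi a b f n) * h n = P n + R n + shiftRight Q n := by
    rintro (_ | n) <;> simp [jacobi, P, Q, R, ha] <;> ring
  have hR' : ∀ n, conj (f n) * jacobi a b h n = P n + Q n + shiftRight R n := by
    rintro (_ | n) <;> simp [jacobi, P, Q, R] <;> ring
  rw [ipN, ipN, tsum_congr hL, tsum_congr hR', (hP.add hR).tsum_add hQ.shiftRight,
    (hP.add hQ).tsum_add hR.shiftRight, hP.tsum_add hR, hP.tsum_add hQ, tsum_shiftRight,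
    tsum_shiftRight]
  ring

lemma Function.HasFiniteSupport.deltaN {f : ℕ → ℂ} (hf : f.HasFiniteSupport) :
    (deltaN f).HasFiniteSupport :=
  deltaN_eq_jacobi ▸ hf.jacobi _ _

lemma Function.HasFiniteSupport.aN {f : ℕ → ℂ} (hf : f.HasFiniteSupport) :
    (aN f).HasFiniteSupport :=
  aN_eq_jacobi ▸ hf.jacobi _ _

lemma ipN_deltaN {f h : ℕ → ℂ} (hf : f.HasFiniteSupport) (hh : h.HasFiniteSupport) :
    ipN (deltaN f) h = ipN f (deltaN h) := by
  rw [deltaN_eq_jacobi]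
  exact ipN_jacobi _ (fun n => by split_ifs <;> simp [map_ofNat]) hf hh

lemma ipN_aN {f h : ℕ → ℂ} (hf : f.HasFiniteSupport) (hh : h.HasFiniteSupport) :
    ipN (aN f) h = ipN f (aN h) := by
  rw [aN_eq_jacobi]
  exact ipN_jacobi _ (fun _ => map_zero _) hf hh

lemma norm_ipN_le {f : ℕ → ℂ} (hf : f.HasFiniteSupport) (g : ℕ → ℂ) :
    ‖ipN f g‖ ≤ ∑' n, ‖f n‖ * ‖g n‖ := by
  rw [ipN]
  simpa only [norm_mul, Complex.norm_conj] using
    norm_tsum_le_tsum_norm (hf.summable_conj_mul g).norm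

lemma deltaN_const_mul (c : ℂ) (f : ℕ → ℂ) (n : ℕ) :
    deltaN (fun k => c * f k) n = c * deltaN f n := by
  simp only [deltaN]
  split_ifs <;> ring

/-- The commutator `[Δ_ℕ, iA_ℕ]`, written out as a band matrix. -/
def commutatorN (f : ℕ → ℂ) : ℕ → ℂ := fun n =>
  if n = 0 then 1 / 2 * f 0 - 1 / 4 * f 1 - 1 / 2 * f 2
  else if n = 1 then f 1 - 1 / 4 * f 0 - 1 / 2 * f 3
  else f n - 1 / 2 * f (n - 2) - 1 / 2 * f (n + 2)

lemma aN_deltaN_sub_deltaN_aN (f : ℕ → ℂ) (n : ℕ) :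
    aN (deltaN f) n - deltaN (aN f) n = I * commutatorN f n := by
  rcases n with _ | _ | n <;> simp [aN, deltaN, commutatorN] <;> ring_nf

/-- The corner matrix `!![-1/2, 1/4; 1/4, 0]` on `span {δ₀, δ₁}`. -/
def K1 : (ℕ → ℂ) →ₗ[ℂ] (ℕ → ℂ) :=
  let π (n : ℕ) : (ℕ → ℂ) →ₗ[ℂ] ℂ := LinearMap.proj n
  (-(1 / 2 : ℂ) • π 0 + (1 / 4 : ℂ) • π 1).smulRight (Pi.single 0 1)
    + ((1 / 4 : ℂ) • π 0).smulRight (Pi.single 1 1)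

lemma finiteDimensional_range_K1 : FiniteDimensional ℂ (LinearMap.range K1) := by
  let S : Set (ℕ → ℂ) := {Pi.single 0 1, Pi.single 1 1}
  have : FiniteDimensional ℂ (Submodule.span ℂ S) :=
    FiniteDimensional.span_of_finite ℂ (Set.toFinite S)
  have hle : LinearMap.range K1 ≤ Submodule.span ℂ S := by
    rintro _ ⟨f, rfl⟩
    exact add_mem (Submodule.smul_mem _ _ (Submodule.subset_span (by simp [S])))
      (Submodule.smul_mem _ _ (Submodule.subset_span (by simp [S])))
  exact Submodule.finiteDimensional_of_le hle

lemma hasFiniteSupport_K1 (f : ℕ → ℂ) : (K1 f).HasFiniteSupport := by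
  refine (Set.finite_Iio 2).subset fun n hn => ?_
  by_contra h
  have : n ≠ 0 ∧ n ≠ 1 := by simp at h; omega
  exact hn (by simp [K1, this])

lemma commutatorN_eq (f : ℕ → ℂ) (n : ℕ) :
    commutatorN f n = 1 / 2 * deltaN (fun k => 4 * f k - deltaN f k) n + K1 f n := by
  rcases n with _ | _ | n <;> simp [commutatorN, deltaN, K1] <;> ring

lemma norm_commutatorN_le (f : ℕ → ℂ) (n : ℕ) :
    ‖commutatorN f n‖ ≤ ‖f n‖ + 1 / 4 * ‖f (n + 1)‖ + 1 / 2 * ‖f (n + 2)‖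
      + 1 / 4 * ‖shiftRight f n‖ + 1 / 2 * ‖shiftRight (shiftRight f) n‖ := by
  have hsub (x y z : ℂ) : ‖x - y - z‖ ≤ ‖x‖ + ‖y‖ + ‖z‖ :=
    (norm_sub_le _ _).trans (add_le_add_left (norm_sub_le _ _) _)
  rcases n with _ | _ | n
  · have := hsub (1 / 2 * f 0) (1 / 4 * f 1) (1 / 2 * f 2)
    simp [commutatorN] at this ⊢
    linarith [norm_nonneg (f 0)]
  · have := hsub (f 1) (1 / 4 * f 0) (1 / 2 * f 3)
    simp [commutatorN] at this ⊢
    linarith [norm_nonneg (f 2)]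
  · have := hsub (f (n + 2)) (1 / 2 * f n) (1 / 2 * f (n + 4))
    simp [commutatorN] at this ⊢
    linarith [norm_nonneg (f (n + 1)), norm_nonneg (f (n + 3))]

lemma tsum_norm_mul_commutatorN_le {f : ℕ → ℂ} (hf : f.HasFiniteSupport) :
    ∑' n, ‖f n‖ * ‖commutatorN f n‖ ≤ 5 / 2 * ∑' n, ‖f n‖ ^ 2 := by
  let h : Fin 5 → ℕ → ℂ :=
    ![f, fun n => f (n + 1), fun n => f (n + 2), shiftRight f, shiftRight (shiftRight f)]
  let w : Fin 5 → ℝ := ![1, 1 / 4, 1 / 2, 1 / 4, 1 / 2]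
  have hfin : ∀ i, (h i).HasFiniteSupport := by
    intro i
    fin_cases i
    exacts [hf, hf.comp_add_right 1, hf.comp_add_right 2, hf.shiftRight, hf.shiftRight.shiftRight]
  have hsq : ∀ i, ∑' n, ‖h i n‖ ^ 2 ≤ ∑' n, ‖f n‖ ^ 2 := by
    intro i
    fin_cases i
    · exact le_rfl
    · exact tsum_sq_norm_comp_add_le hf.summable_sq_norm 1
    · exact tsum_sq_norm_comp_add_le hf.summable_sq_norm 2
    · exact (tsum_sq_norm_shiftRight f).le
    · exact (tsum_sq_norm_shiftRight _).trans (tsum_sq_norm_shiftRight f) |>.le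
  have := tsum_norm_mul_le_of_norm_le_sum Finset.univ (w := w) (by simp [w, Fin.forall_fin_succ])
    hf.summable_sq_norm (fun i _ => (hfin i).summable_sq_norm) (fun i _ => hsq i)
    (g := commutatorN f) (fun n => by
      simpa [Fin.sum_univ_five, h, w, add_assoc] using norm_commutatorN_le f n)
  convert this using 2
  simp [Fin.sum_univ_five, w]
  norm_num

lemma ipN_aN_deltaN_sub {f : ℕ → ℂ} (hf : f.HasFiniteSupport) :
    ipN (aN f) (deltaN f) - ipN (deltaN f) (aN f) = ipN f fun n => I * commutatorN f n := by
  rw [ipN_aN hf hf.deltaN, ipN_deltaN hf hf.aN, ipN, ipN, ipN,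
    ← (hf.summable_conj_mul _).tsum_sub (hf.summable_conj_mul _)]
  simp only [← mul_sub, aN_deltaN_sub_deltaN_aN]

/-- **Commutator formula `[Δ_ℕ, iA_ℕ] = (1/2)Δ_ℕ(4 − Δ_ℕ) + K₁` with `K₁` of finite
rank, and the `C¹(A_ℕ)` bound.** -/
theorem stmt2 :
    ∃ (K₁ : (ℕ → ℂ) →ₗ[ℂ] (ℕ → ℂ)) (c : ℝ),
      FiniteDimensional ℂ (LinearMap.range K₁) ∧
      (∀ f : ℕ → ℂ, (Function.support f).Finite →
        (Function.support (K₁ f)).Finite) ∧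
      0 ≤ c ∧
      (∀ f : ℕ → ℂ, (Function.support f).Finite →
        (∀ n : ℕ,
          deltaN (fun k => I * aN f k) n - I * aN (deltaN f) n
            = (1 / 2) * deltaN (fun k => 4 * f k - deltaN f k) n + K₁ f n)) ∧
      (∀ f : ℕ → ℂ, (Function.support f).Finite →
        ‖ipN (aN f) (deltaN f) - ipN (deltaN f) (aN f)‖
          ≤ c * ∑' n : ℕ, ‖f n‖ ^ 2) := by
  refine ⟨K1, 5 / 2, finiteDimensional_range_K1, fun f _ => hasFiniteSupport_K1 f, by norm_num,
    fun f _ n => ?_, fun f hf => ?_⟩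
  · rw [deltaN_const_mul, ← commutatorN_eq]
    linear_combination (-I) * aN_deltaN_sub_deltaN_aN f n - commutatorN f n * I_mul_I
  · calc ‖ipN (aN f) (deltaN f) - ipN (deltaN f) (aN f)‖
        = ‖ipN f fun n => I * commutatorN f n‖ := by rw [ipN_aN_deltaN_sub hf]
      _ ≤ ∑' n, ‖f n‖ * ‖I * commutatorN f n‖ := norm_ipN_le hf _
      _ = ∑' n, ‖f n‖ * ‖commutatorN f n‖ := by simp
      _ ≤ 5 / 2 * ∑' n, ‖f n‖ ^ 2 := tsum_norm_mul_commutatorN_le hf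
end
end

section
/- Let V be a countable set, m, m' : V → (0,∞) two weights, and E' : V×V → [0,∞) symmetric, vanishing on the diagonal, such that every vertex has finitely many E'-neighbors. Then: (1) T_{m→m'} is a unitary operator (a surjective linear isometry) from ℓ²(V, m) onto ℓ²(V, m'); (2) setting Ẽ(x,y) := E'(x,y)·√(m(x)m(y)/(m'(x)m'(y))) and W(x) := (1/m(x))·∑_{y∈V} Ẽ(x,y)·(1 − √(m(x)m'(y)/(m(y)m'(x)))), one has, for every finitely supported f : V → ℂ, Δ_{G'}(T_{m→m'} f) = T_{m→m'}( Δ_{G̃} f − W·f ), where G' = (E', V, m') and G̃ = (Ẽ, V, m). -/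
noncomputable section

open Complex

/-- The gauge transform `T_{m→m'} f = (x ↦ √(m(x)/m'(x))·f(x))`. -/
def Tw {V : Type*} (m m' : V → ℝ) (f : V → ℂ) : V → ℂ :=
  fun x => (Real.sqrt (m x / m' x) : ℂ) * f x

/-- The Laplacian of the weighted graph `(E, V, m)`:
`(Δ_G f)(x) = (1/m(x))·∑_y E(x,y)·(f(x) − f(y))`. -/
def lap {V : Type*} (E : V → V → ℝ) (m : V → ℝ) (f : V → ℂ) : V → ℂ :=
  fun x => (1 / (m x : ℂ)) * ∑' y : V, ((E x y : ℝ) : ℂ) * (f x - f y)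

/-- Membership in `ℓ²(V, m)`. -/
def MemL2 {V : Type*} (m : V → ℝ) (f : V → ℂ) : Prop :=
  Summable fun x => m x * ‖f x‖ ^ 2

/-- The inner product of `ℓ²(V, m)`. -/
def wip {V : Type*} (m : V → ℝ) (f g : V → ℂ) : ℂ :=
  ∑' x : V, (m x : ℂ) * ((starRingEnd ℂ) (f x) * g x)

/-! The multiplication operator `T_{m→m'}` by `s = √(m/m')` satisfies `m' |s f|² = m |f|²`, so it is
an isometry, with inverse `T_{m'→m}`. For the intertwining formula write
`Ẽ(x,y) = E'(x,y) s(x) s(y)` and `√(m(x)m'(y)/(m(y)m'(x))) = s(x)/s(y)`; then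
`Δ_{G̃} f(x) − W(x) f(x) = (s(x)/m(x)) ∑_y E'(x,y) (s(x) f(x) − s(y) f(y))`, and multiplying by
`s(x)` turns the prefactor `s(x)²/m(x)` into `1/m'(x)`. -/

theorem Real.mul_sqrt_div_sq {a b : ℝ} (ha : 0 ≤ a) (hb : 0 < b) : b * √(a / b) ^ 2 = a := by
  rw [Real.sq_sqrt (by positivity)]
  field_simp

theorem Real.sqrt_mul_div_mul {a b c d : ℝ} (hac : 0 ≤ a / c) :
    √(a * b / (c * d)) = √(a / c) * √(b / d) := by
  rw [mul_div_mul_comm, Real.sqrt_mul hac]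

theorem Real.sqrt_mul_div_mul_comm {a b c d : ℝ} (hbd : 0 ≤ b / d) :
    √(a * d / (b * c)) = √(a / c) / √(b / d) := by
  rw [mul_comm b c, ← div_div_div_eq, Real.sqrt_div' _ hbd]

section Gauge

variable {V : Type*} {m m' : V → ℝ}

theorem Tw_smul_add (a : ℂ) (f g : V → ℂ) :
    Tw m m' (a • f + g) = a • Tw m m' f + Tw m m' g := by
  funext x
  simp only [Tw, Pi.add_apply, Pi.smul_apply, smul_eq_mul]
  ring

theorem weight_mul_norm_Tw_sq (f : V → ℂ) {x : V} (hm : 0 ≤ m x) (hm' : 0 < m' x) :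
    m' x * ‖Tw m m' f x‖ ^ 2 = m x * ‖f x‖ ^ 2 := by
  rw [Tw, norm_mul, Complex.norm_real, Real.norm_of_nonneg (Real.sqrt_nonneg _), mul_pow,
    ← mul_assoc, Real.mul_sqrt_div_sq hm hm']

theorem memL2_Tw_iff (hm : ∀ x, 0 ≤ m x) (hm' : ∀ x, 0 < m' x) (f : V → ℂ) :
    MemL2 m' (Tw m m' f) ↔ MemL2 m f := by
  simp only [MemL2, weight_mul_norm_Tw_sq f (hm _) (hm' _)]

theorem Tw_Tw (hm : ∀ x, 0 < m x) (hm' : ∀ x, 0 < m' x) (f : V → ℂ) :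
    Tw m m' (Tw m' m f) = f := by
  funext x
  have hx := hm x
  have hx' := hm' x
  have : √(m x / m' x) * √(m' x / m x) = 1 := by
    rw [← Real.sqrt_mul (by positivity), div_mul_div_comm, mul_comm (m x),
      div_self (by positivity), Real.sqrt_one]
  simp only [Tw, ← mul_assoc, ← Complex.ofReal_mul, this, Complex.ofReal_one, one_mul]

theorem bijOn_Tw (hm : ∀ x, 0 < m x) (hm' : ∀ x, 0 < m' x) :
    Set.BijOn (Tw m m') {f | MemL2 m f} {f | MemL2 m' f} :=
  Set.InvOn.bijOn ⟨fun f _ => Tw_Tw hm' hm f, fun f _ => Tw_Tw hm hm' f⟩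
    (fun f hf => (memL2_Tw_iff (fun x => (hm x).le) hm' f).2 hf)
    (fun f hf => (memL2_Tw_iff (fun x => (hm' x).le) hm f).2 hf)

theorem wip_Tw (hm : ∀ x, 0 ≤ m x) (hm' : ∀ x, 0 < m' x) (f g : V → ℂ) :
    wip m' (Tw m m' f) (Tw m m' g) = wip m f g := by
  refine tsum_congr fun x => ?_
  have key : ((m' x * √(m x / m' x) ^ 2 : ℝ) : ℂ) = m x := by
    rw [Real.mul_sqrt_div_sq (hm x) (hm' x)]
  simp only [Tw, map_mul, Complex.conj_ofReal]
  push_cast at key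
  linear_combination ((starRingEnd ℂ) (f x) * g x) * key

end Gauge

section Laplacian

variable {V : Type*} {m m' : V → ℝ} {E : V → V → ℝ}

-- The weights `Ẽ` and the potential `W` of the graph `G̃ = (Ẽ, V, m)`.
def gaugeEdgeWeight (m m' : V → ℝ) (E : V → V → ℝ) (x y : V) : ℝ :=
  E x y * √(m x * m y / (m' x * m' y))

def gaugePotential (m m' : V → ℝ) (E : V → V → ℝ) (x : V) : ℝ :=
  1 / m x * ∑' y, gaugeEdgeWeight m m' E x y * (1 - √(m x * m' y / (m y * m' x)))

theorem lap_apply_eq_sum {t : Finset V} {x : V} (ht : ∀ y ∉ t, E x y = 0) (f : V → ℂ) :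
    lap E m f x = 1 / m x * ∑ y ∈ t, E x y * (f x - f y) := by
  rw [lap, tsum_eq_sum fun y hy => by simp [ht y hy]]

theorem lap_Tw_apply (hm : ∀ x, 0 < m x) (hm' : ∀ x, 0 < m' x) {x : V}
    (hx : {y | E x y ≠ 0}.Finite) (f : V → ℂ) :
    lap E m' (Tw m m' f) x = Tw m m' (fun x =>
      lap (gaugeEdgeWeight m m' E) m f x - (gaugePotential m m' E x : ℂ) * f x) x := by
  have ht : ∀ y ∉ hx.toFinset, E x y = 0 := by simp
  have ht' : ∀ y ∉ hx.toFinset, gaugeEdgeWeight m m' E x y = 0 := by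
    simp +contextual [gaugeEdgeWeight]
  simp only [Tw]
  rw [lap_apply_eq_sum ht, lap_apply_eq_sum ht', gaugePotential,
    tsum_eq_sum (s := hx.toFinset) fun y hy => by simp [ht' y hy]]
  simp only [gaugeEdgeWeight, Real.sqrt_mul_div_mul (div_nonneg (hm x).le (hm' x).le),
    Real.sqrt_mul_div_mul_comm (div_nonneg (hm _).le (hm' _).le)]
  push_cast
  have hmx : (m x : ℂ) = m' x * (√(m x / m' x) : ℂ) ^ 2 := by
    exact_mod_cast (Real.mul_sqrt_div_sq (hm x).le (hm' x)).symm
  rw [mul_assoc (1 / _) _ (f x), Finset.sum_mul, ← mul_sub, ← Finset.sum_sub_distrib,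
    Finset.mul_sum, Finset.mul_sum, Finset.mul_sum]
  refine Finset.sum_congr rfl fun y _ => ?_
  have hsx : (√(m x / m' x) : ℂ) ≠ 0 := by
    exact_mod_cast (Real.sqrt_pos.2 (div_pos (hm x) (hm' x))).ne'
  have hsy : (√(m y / m' y) : ℂ) ≠ 0 := by
    exact_mod_cast (Real.sqrt_pos.2 (div_pos (hm y) (hm' y))).ne'
  have hm'x : (m' x : ℂ) ≠ 0 := by exact_mod_cast (hm' x).ne'
  rw [hmx, Tw, Tw]
  field_simp
  ring

end Laplacian

theorem stmt3_general {V : Type*} (m m' : V → ℝ)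
    (hm : ∀ x, 0 < m x) (hm' : ∀ x, 0 < m' x)
    (E' : V → V → ℝ)
    (hlocfin : ∀ x, {y | E' x y ≠ 0}.Finite) :
    -- (1) `T_{m→m'}` is a unitary operator from `ℓ²(V,m)` onto `ℓ²(V,m')`:
    (∀ a : ℂ, ∀ f g : V → ℂ,
      Tw m m' (a • f + g) = a • Tw m m' f + Tw m m' g) ∧
    (∀ f : V → ℂ, MemL2 m f ↔ MemL2 m' (Tw m m' f)) ∧
    (Set.BijOn (Tw m m') {f | MemL2 m f} {f | MemL2 m' f}) ∧
    (∀ f g : V → ℂ, MemL2 m f → MemL2 m g →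
      wip m' (Tw m m' f) (Tw m m' g) = wip m f g) ∧
    -- (2) the intertwining formula `Δ_{G'} ∘ T_{m→m'} = T_{m→m'} ∘ (Δ_{G̃} − W·)`
    (∀ f : V → ℂ, (Function.support f).Finite →
      lap E' m' (Tw m m' f)
        = Tw m m' (fun x =>
            lap (fun x y => E' x y * Real.sqrt (m x * m y / (m' x * m' y))) m f x
            - (((1 / m x) * ∑' y : V,
                (E' x y * Real.sqrt (m x * m y / (m' x * m' y)))
                  * (1 - Real.sqrt (m x * m' y / (m y * m' x))) : ℝ) : ℂ) * f x)) :=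
  ⟨Tw_smul_add,
    fun f => (memL2_Tw_iff (fun x => (hm x).le) hm' f).symm,
    bijOn_Tw hm hm',
    fun f g _ _ => wip_Tw (fun x => (hm x).le) hm' f g,
    fun f _ => funext fun x => lap_Tw_apply hm hm' (hlocfin x) f⟩

/-- **The gauge transform is unitary and intertwines the Laplacians
(Proposition on the unitary transformation `T_{m→m'}`).** -/
theorem stmt3 {V : Type*} [Countable V] (m m' : V → ℝ)
    (hm : ∀ x, 0 < m x) (hm' : ∀ x, 0 < m' x)
    (E' : V → V → ℝ) (hsym : ∀ x y, E' x y = E' y x)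
    (hpos : ∀ x y, 0 ≤ E' x y) (hdiag : ∀ x, E' x x = 0)
    (hlocfin : ∀ x, {y | E' x y ≠ 0}.Finite) :
    -- (1) `T_{m→m'}` is a unitary operator from `ℓ²(V,m)` onto `ℓ²(V,m')`:
    (∀ a : ℂ, ∀ f g : V → ℂ,
      Tw m m' (a • f + g) = a • Tw m m' f + Tw m m' g) ∧
    (∀ f : V → ℂ, MemL2 m f ↔ MemL2 m' (Tw m m' f)) ∧
    (Set.BijOn (Tw m m') {f | MemL2 m f} {f | MemL2 m' f}) ∧
    (∀ f g : V → ℂ, MemL2 m f → MemL2 m g →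
      wip m' (Tw m m' f) (Tw m m' g) = wip m f g) ∧
    -- (2) the intertwining formula `Δ_{G'} ∘ T_{m→m'} = T_{m→m'} ∘ (Δ_{G̃} − W·)`
    (∀ f : V → ℂ, (Function.support f).Finite →
      lap E' m' (Tw m m' f)
        = Tw m m' (fun x =>
            lap (fun x y => E' x y * Real.sqrt (m x * m y / (m' x * m' y))) m f x
            - (((1 / m x) * ∑' y : V,
                (E' x y * Real.sqrt (m x * m y / (m' x * m' y)))
                  * (1 - Real.sqrt (m x * m' y / (m y * m' x))) : ℝ) : ℂ) * f x)) :=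
  stmt3_general m m' hm hm' E' hlocfin
end
end
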